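/- Let W be an m×m complex Hermitian positive definite matrix and let P, P_T > 0 satisfy P > 1/λ_min(W) and P_T > m/λ_min(W) − tr(W⁻¹). Set 1/λ = (P_T + tr(W⁻¹))/m and suppose P ≥ 1/λ − (W⁻¹)ᵢᵢ for every i (all per-antenna constraints inactive). Then the water-filling matrix R* = (1/λ)·I − W⁻¹ is positive definite, lies in the joint constraint set S(P_T, P), and maximizes log det(I + W·R) over R ∈ S(P_T, P). -/

import Mathlib

open Matrix ComplexOrder

noncomputable def mutualInfo {m : ℕ} (W R : Matrix (Fin m) (Fin m) ℂ) : ℝ :=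
  Real.log ((1 + W * R).det.re)

def jointSet (m : ℕ) (PT P : ℝ) : Set (Matrix (Fin m) (Fin m) ℂ) :=
  {R | R.PosSemidef ∧ R.trace.re ≤ PT ∧ ∀ i, (R i i).re ≤ P}

noncomputable def lamMin {m : ℕ} {W : Matrix (Fin m) (Fin m) ℂ} (hW : W.IsHermitian) : ℝ :=
  sInf (Set.range hW.eigenvalues)

/-!
Since `λ_min(W)·I ≤ W` in the Loewner order and inversion is operator antitone,
`W⁻¹ ≤ λ_min(W)⁻¹·I < (1/λ)·I`, so `R*` is positive definite; its trace is exactly `P_T` and its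
diagonal entries are `1/λ − (W⁻¹)ᵢᵢ`. For optimality, `det(I + W R) = det W · det(W⁻¹ + R)`, and
AM–GM on the eigenvalues gives `det(W⁻¹ + R) ≤ (tr(W⁻¹ + R)/m)^m ≤ (1/λ)^m = det(W⁻¹ + R*)`.
-/

theorem Real.prod_le_pow_sum_div_card {ι : Type*} [Fintype ι] [Nonempty ι] {z : ι → ℝ}
    (hz : ∀ i, 0 ≤ z i) : ∏ i, z i ≤ ((∑ i, z i) / Fintype.card ι) ^ Fintype.card ι := by
  have hcard : (0 : ℝ) < Fintype.card ι := by positivity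
  have hprod : 0 ≤ ∏ i, z i := Finset.prod_nonneg fun i _ => hz i
  have hgm := Real.geom_mean_le_arith_mean Finset.univ (fun _ => 1) z
    (fun _ _ => zero_le_one) (by simpa using hcard) (fun i _ => hz i)
  simp only [Real.rpow_one, one_mul, Finset.sum_const, Finset.card_univ, nsmul_eq_mul,
    mul_one] at hgm
  calc ∏ i, z i = ((∏ i, z i) ^ (Fintype.card ι : ℝ)⁻¹) ^ Fintype.card ι := by
        rw [← Real.rpow_natCast, ← Real.rpow_mul hprod, inv_mul_cancel₀ hcard.ne', Real.rpow_one]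
    _ ≤ _ := pow_le_pow_left₀ (Real.rpow_nonneg hprod _) hgm _

namespace Matrix

open scoped MatrixOrder Matrix.Norms.L2Operator

variable {n : Type*} [Fintype n] [DecidableEq n]

theorem PosSemidef.det_le_pow_trace_div_card {𝕜 : Type*} [RCLike 𝕜] [Nonempty n]
    {A : Matrix n n 𝕜} (hA : A.PosSemidef) :
    A.det ≤ (A.trace / Fintype.card n) ^ Fintype.card n := by
  rw [hA.isHermitian.det_eq_prod_eigenvalues, hA.isHermitian.trace_eq_sum_eigenvalues,
    ← RCLike.ofReal_prod, ← RCLike.ofReal_sum, ← RCLike.ofReal_natCast, ← RCLike.ofReal_div,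
    ← RCLike.ofReal_pow, RCLike.ofReal_le_ofReal]
  exact Real.prod_le_pow_sum_div_card hA.eigenvalues_nonneg

theorem det_one_add_mul_eq_det_mul_det_inv_add {R : Type*} [CommRing R] {W M : Matrix n n R}
    (hW : IsUnit W.det) : (1 + W * M).det = W.det * (W⁻¹ + M).det := by
  rw [← det_mul, mul_add, mul_nonsing_inv W hW]

theorem algebraMap_eq_smul_one (r : ℝ) : algebraMap ℝ (Matrix n n ℂ) r = (r : ℂ) • 1 := by
  ext i j
  by_cases h : i = j <;> simp [h, algebraMap_eq_diagonal]

theorem smul_one_inv {c : ℂ} (hc : c ≠ 0) : (c • (1 : Matrix n n ℂ))⁻¹ = c⁻¹ • 1 :=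
  inv_eq_left_inv (by rw [smul_mul_smul, mul_one, inv_mul_cancel₀ hc, one_smul])

theorem PosDef.inv_le_smul_one {W : Matrix n n ℂ} (hW : W.PosDef) {c : ℝ} (hc : 0 < c)
    (hcW : ∀ i, c ≤ hW.isHermitian.eigenvalues i) : W⁻¹ ≤ (c⁻¹ : ℂ) • 1 := by
  have hcW' : algebraMap ℝ _ c ≤ W := algebraMap_le_of_le_spectrum (by
    rw [hW.isHermitian.spectrum_real_eq_range_eigenvalues]
    rintro _ ⟨i, rfl⟩
    exact hcW i) hW.isHermitian
  have := CStarAlgebra.antitoneOn_ringInverse (isStrictlyPositive_algebraMap hc)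
    (isStrictlyPositive_iff_posDef.mpr hW) hcW'
  rwa [← nonsing_inv_eq_ringInverse, ← nonsing_inv_eq_ringInverse, algebraMap_eq_smul_one,
    smul_one_inv (by exact_mod_cast hc.ne')] at this

theorem trace_smul_one_sub {R : Type*} [CommRing R] (c : R) (M : Matrix n n R) :
    (c • 1 - M).trace = Fintype.card n * c - M.trace := by
  rw [trace_sub, trace_smul, trace_one, smul_eq_mul, mul_comm]

theorem PosDef.smul_one_sub_inv {W : Matrix n n ℂ} (hW : W.PosDef) {c t : ℝ} (hc : 0 < c)
    (hcW : ∀ i, c ≤ hW.isHermitian.eigenvalues i) (ht : c⁻¹ < t) :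
    ((t : ℂ) • 1 - W⁻¹).PosDef := by
  have hle : algebraMap ℝ _ (t - c⁻¹) ≤ (t : ℂ) • 1 - W⁻¹ := by
    rw [algebraMap_eq_smul_one, Complex.ofReal_sub, Complex.ofReal_inv, sub_smul]
    exact sub_le_sub_left (hW.inv_le_smul_one hc hcW) _
  exact isStrictlyPositive_iff_posDef.mp
    ((isStrictlyPositive_algebraMap (sub_pos.mpr ht)).of_le hle)

end Matrix

section

variable {m : ℕ}

theorem lamMin_mem_range [NeZero m] {W : Matrix (Fin m) (Fin m) ℂ} (hW : W.IsHermitian) :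
    lamMin hW ∈ Set.range hW.eigenvalues :=
  (Set.range_nonempty _).csInf_mem (Set.finite_range _)

theorem lamMin_le_eigenvalues {W : Matrix (Fin m) (Fin m) ℂ} (hW : W.IsHermitian) (i : Fin m) :
    lamMin hW ≤ hW.eigenvalues i :=
  csInf_le (Set.finite_range _).bddBelow ⟨i, rfl⟩

theorem lamMin_pos [NeZero m] {W : Matrix (Fin m) (Fin m) ℂ} (hW : W.PosDef) :
    0 < lamMin hW.isHermitian := by
  obtain ⟨i, hi⟩ := lamMin_mem_range hW.isHermitian
  exact hi ▸ hW.eigenvalues_pos i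

theorem mutualInfo_le_of_trace_le [NeZero m] {W R : Matrix (Fin m) (Fin m) ℂ} (hW : W.PosDef)
    (hR : R.PosSemidef) {t : ℝ} (htr : R.trace.re ≤ ((t : ℂ) • 1 - W⁻¹).trace.re) :
    mutualInfo W R ≤ mutualInfo W ((t : ℂ) • 1 - W⁻¹) := by
  have hWdet : IsUnit W.det := (isUnit_iff_isUnit_det W).mp hW.isUnit
  have hA : (W⁻¹ + R).PosDef := hW.inv.add_posSemidef hR
  have hm : (0 : ℂ) < m := by exact_mod_cast Nat.pos_of_neZero m
  have htrA : (W⁻¹ + R).trace ≤ m * t := by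
    rw [trace_smul_one_sub, Fintype.card_fin, Complex.sub_re, Complex.re_mul_ofReal,
      Complex.natCast_re] at htr
    rw [Complex.le_def, Complex.re_mul_ofReal, Complex.im_mul_ofReal, Complex.natCast_re,
      Complex.natCast_im, zero_mul]
    refine ⟨?_, (Complex.le_def.mp hA.posSemidef.trace_nonneg).2.symm⟩
    rw [trace_add, Complex.add_re]
    linarith
  have hdetA : (W⁻¹ + R).det ≤ (t : ℂ) ^ m := by
    refine hA.posSemidef.det_le_pow_trace_div_card.trans ?_
    rw [Fintype.card_fin]
    exact pow_le_pow_left₀ (div_nonneg hA.posSemidef.trace_nonneg hm.le)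
      ((div_le_iff₀' hm).mpr htrA) m
  unfold mutualInfo
  rw [det_one_add_mul_eq_det_mul_det_inv_add hWdet, det_one_add_mul_eq_det_mul_det_inv_add hWdet,
    add_sub_cancel, det_smul, det_one, mul_one, Fintype.card_fin]
  exact Real.log_le_log (Complex.lt_def.mp (mul_pos hW.det_pos hA.det_pos)).1
    (Complex.le_def.mp (mul_le_mul_of_nonneg_left hdetA hW.det_pos.le)).1

end

theorem stmt5_general (m : ℕ) (hm : 1 ≤ m) (W : Matrix (Fin m) (Fin m) ℂ) (hW : W.PosDef)
    (P PT : ℝ)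
    (hPTlow : m / lamMin hW.1 - (W⁻¹).trace.re < PT)
    (invlam : ℝ) (hinvlam : invlam = (PT + (W⁻¹).trace.re) / m)
    (hPAinactive : ∀ i, invlam - (W⁻¹ i i).re ≤ P) :
    ((invlam : ℂ) • (1 : Matrix (Fin m) (Fin m) ℂ) - W⁻¹).PosDef ∧
    (invlam : ℂ) • (1 : Matrix (Fin m) (Fin m) ℂ) - W⁻¹ ∈ jointSet m PT P ∧
    ∀ R ∈ jointSet m PT P,
      mutualInfo W R ≤ mutualInfo W ((invlam : ℂ) • (1 : Matrix (Fin m) (Fin m) ℂ) - W⁻¹) := by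
  have : NeZero m := ⟨by omega⟩
  have hm0 : (0 : ℝ) < m := by exact_mod_cast hm
  have hc := lamMin_pos hW
  have hgt : (lamMin hW.1)⁻¹ < invlam := by
    rw [hinvlam, lt_div_iff₀ hm0, inv_mul_eq_div]
    linarith
  have htrace : ((invlam : ℂ) • (1 : Matrix (Fin m) (Fin m) ℂ) - W⁻¹).trace.re = PT := by
    rw [trace_smul_one_sub, Fintype.card_fin, Complex.sub_re, Complex.re_mul_ofReal,
      Complex.natCast_re, hinvlam]
    field_simp
    ring
  have hPD := hW.smul_one_sub_inv hc (lamMin_le_eigenvalues hW.1) hgt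
  refine ⟨hPD, ⟨hPD.posSemidef, htrace.le, fun i => ?_⟩, fun R hR => ?_⟩
  · simpa [Matrix.sub_apply, one_apply_eq] using hPAinactive i
  · exact mutualInfo_le_of_trace_le hW hR.1 (htrace ▸ hR.2.1)

/-- When all per-antenna constraints are inactive, the standard water-filling matrix
`R* = (1/λ)·I − W⁻¹` with `1/λ = (P_T + tr W⁻¹)/m` is the full-rank optimum under the
joint constraints. -/
theorem stmt5 (m : ℕ) (hm : 1 ≤ m) (W : Matrix (Fin m) (Fin m) ℂ) (hW : W.PosDef)
    (P PT : ℝ) (hP : 0 < P) (hPT : 0 < PT)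
    (hPlow : 1 / lamMin hW.1 < P)
    (hPTlow : m / lamMin hW.1 - (W⁻¹).trace.re < PT)
    (invlam : ℝ) (hinvlam : invlam = (PT + (W⁻¹).trace.re) / m)
    (hPAinactive : ∀ i, invlam - (W⁻¹ i i).re ≤ P) :
    ((invlam : ℂ) • (1 : Matrix (Fin m) (Fin m) ℂ) - W⁻¹).PosDef ∧
    (invlam : ℂ) • (1 : Matrix (Fin m) (Fin m) ℂ) - W⁻¹ ∈ jointSet m PT P ∧
    ∀ R ∈ jointSet m PT P,
      mutualInfo W R ≤ mutualInfo W ((invlam : ℂ) • (1 : Matrix (Fin m) (Fin m) ℂ) - W⁻¹) :=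
  stmt5_general m hm W hW P PT hPTlow invlam hinvlam hPAinactive
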